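/- In a Quillen model category, with notation as in the mapping-path-object construction: p : X → Y a weak equivalence of fibrant objects, P the pullback of π : Y^I → Y × Y along p × id : X × Y → Y × Y, then the map q₃ : P → Y given by composing P → X × Y with the projection to Y is a trivial fibration. -/

import Mathlib

/-!
By the retract argument, fibrations and trivial fibrations are exactly the maps with the right
lifting property against trivial cofibrations and cofibrations respectively, so both classes are
stable under base change, and fibrations under composition. Hence `q₃`, the base change of `π`
followed by the projection `X ⨯ Y ⟶ Y` (a base change of `X ⟶ ⊤`), is a fibration.

Pasting pullback squares exhibits `proj_X ∘ q₁ : P ⟶ X` as the base change along `p` of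
`proj₁ ∘ π : Y^I ⟶ Y`, a fibration (as `Y` is fibrant) which has the weak equivalence `j` as a
section and so is trivial. The map `x ↦ (x, p x, j (p x))` is a section of `proj_X ∘ q₁`, hence
a weak equivalence, and its composite with `q₃` is `p`; two-out-of-three finishes.
-/

open CategoryTheory CategoryTheory.Limits

universe v u

/-- A Quillen (closed) model structure on a category `C`. -/
structure QuillenModelStructure (C : Type u) [Category.{v} C]
    [HasFiniteLimits C] [HasFiniteColimits C] where
  weq : MorphismProperty C
  fib : MorphismProperty C
  cof : MorphismProperty C
  weq_of_iso : ∀ {X Y : C} (f : X ⟶ Y), IsIso f → weq f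
  fib_of_iso : ∀ {X Y : C} (f : X ⟶ Y), IsIso f → fib f
  cof_of_iso : ∀ {X Y : C} (f : X ⟶ Y), IsIso f → cof f
  weq_comp : ∀ {X Y Z : C} (f : X ⟶ Y) (g : Y ⟶ Z), weq f → weq g → weq (f ≫ g)
  weq_of_comp_left : ∀ {X Y Z : C} (f : X ⟶ Y) (g : Y ⟶ Z), weq g → weq (f ≫ g) → weq f
  weq_of_comp_right : ∀ {X Y Z : C} (f : X ⟶ Y) (g : Y ⟶ Z), weq f → weq (f ≫ g) → weq g
  weq_retract : ∀ {X Y X' Y' : C} (f : X ⟶ Y) (f' : X' ⟶ Y')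
    (iX : X' ⟶ X) (rX : X ⟶ X') (iY : Y' ⟶ Y) (rY : Y ⟶ Y'),
    iX ≫ rX = 𝟙 X' → iY ≫ rY = 𝟙 Y' → iX ≫ f = f' ≫ iY → f ≫ rY = rX ≫ f' →
    weq f → weq f'
  fib_retract : ∀ {X Y X' Y' : C} (f : X ⟶ Y) (f' : X' ⟶ Y')
    (iX : X' ⟶ X) (rX : X ⟶ X') (iY : Y' ⟶ Y) (rY : Y ⟶ Y'),
    iX ≫ rX = 𝟙 X' → iY ≫ rY = 𝟙 Y' → iX ≫ f = f' ≫ iY → f ≫ rY = rX ≫ f' →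
    fib f → fib f'
  cof_retract : ∀ {X Y X' Y' : C} (f : X ⟶ Y) (f' : X' ⟶ Y')
    (iX : X' ⟶ X) (rX : X ⟶ X') (iY : Y' ⟶ Y) (rY : Y ⟶ Y'),
    iX ≫ rX = 𝟙 X' → iY ≫ rY = 𝟙 Y' → iX ≫ f = f' ≫ iY → f ≫ rY = rX ≫ f' →
    cof f → cof f'
  lift_cof_trivFib : ∀ {A B X Y : C} (i : A ⟶ B) (p : X ⟶ Y),
    cof i → fib p → weq p → HasLiftingProperty i p
  lift_trivCof_fib : ∀ {A B X Y : C} (i : A ⟶ B) (p : X ⟶ Y),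
    cof i → weq i → fib p → HasLiftingProperty i p
  factor_cof_trivFib : ∀ {X Y : C} (f : X ⟶ Y), ∃ (Z : C) (i : X ⟶ Z) (q : Z ⟶ Y),
    cof i ∧ fib q ∧ weq q ∧ i ≫ q = f
  factor_trivCof_fib : ∀ {X Y : C} (f : X ⟶ Y), ∃ (Z : C) (i : X ⟶ Z) (q : Z ⟶ Y),
    cof i ∧ weq i ∧ fib q ∧ i ≫ q = f

variable {C : Type u} [Category.{v} C] [HasFiniteLimits C] [HasFiniteColimits C]

/-- An object is fibrant if the map to the terminal object is a fibration. -/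
def QuillenModelStructure.Fibrant (M : QuillenModelStructure C) (X : C) : Prop :=
  M.fib (terminal.from X)

/-- An object is cofibrant if the map from the initial object is a cofibration. -/
def QuillenModelStructure.Cofibrant (M : QuillenModelStructure C) (X : C) : Prop :=
  M.cof (initial.to X)

namespace QuillenModelStructure

variable (M : QuillenModelStructure C)

abbrev trivCof : MorphismProperty C := M.cof ⊓ M.weq

abbrev trivFib : MorphismProperty C := M.fib ⊓ M.weq

lemma weq_id (X : C) : M.weq (𝟙 X) := M.weq_of_iso _ inferInstance

variable {M}

lemma weq_of_comp_eq_id_of_weq_right {X Y : C} {s : X ⟶ Y} {f : Y ⟶ X} (h : s ≫ f = 𝟙 X)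
    (hf : M.weq f) : M.weq s :=
  M.weq_of_comp_left s f hf (h ▸ M.weq_id X)

lemma weq_of_comp_eq_id_of_weq_left {X Y : C} {s : X ⟶ Y} {f : Y ⟶ X} (h : s ≫ f = 𝟙 X)
    (hs : M.weq s) : M.weq f :=
  M.weq_of_comp_right s f hs (h ▸ M.weq_id X)

variable (M)

instance : M.weq.IsStableUnderRetracts where
  of_retract h hg := M.weq_retract _ _ h.i.left h.r.left h.i.right h.r.right
    h.retract_left h.retract_right h.i_w h.r_w.symm hg

instance : M.fib.IsStableUnderRetracts where
  of_retract h hg := M.fib_retract _ _ h.i.left h.r.left h.i.right h.r.right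
    h.retract_left h.retract_right h.i_w h.r_w.symm hg

lemma fib_eq_rlp_trivCof : M.fib = M.trivCof.rlp := by
  refine le_antisymm (fun _ _ f hf _ _ i hi ↦ M.lift_trivCof_fib i f hi.1 hi.2 hf) ?_
  intro _ _ f hf
  obtain ⟨_, i, q, hi, hwi, hq, hfac⟩ := M.factor_trivCof_fib f
  have := hf i ⟨hi, hwi⟩
  exact M.fib.of_retract (RetractArrow.ofRightLiftingProperty hfac) hq

lemma trivFib_eq_rlp_cof : M.trivFib = M.cof.rlp := by
  refine le_antisymm (fun _ _ f hf _ _ i hi ↦ M.lift_cof_trivFib i f hi hf.1 hf.2) ?_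
  intro _ _ f hf
  obtain ⟨_, i, q, hi, hq, hwq, hfac⟩ := M.factor_cof_trivFib f
  have := hf i hi
  exact M.trivFib.of_retract (RetractArrow.ofRightLiftingProperty hfac) ⟨hq, hwq⟩

instance : M.fib.IsStableUnderBaseChange := M.fib_eq_rlp_trivCof ▸ inferInstance

instance : M.fib.IsMultiplicative := M.fib_eq_rlp_trivCof ▸ inferInstance

instance : M.trivFib.IsStableUnderBaseChange := M.trivFib_eq_rlp_cof ▸ inferInstance

variable {M}

lemma fib_prod_fst (X : C) {Y : C} (hY : M.Fibrant Y) : M.fib (prod.fst : X ⨯ Y ⟶ X) :=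
  M.fib.of_isPullback (IsPullback.of_hasBinaryProduct' X Y).flip hY

lemma fib_prod_snd {X : C} (hX : M.Fibrant X) (Y : C) : M.fib (prod.snd : X ⨯ Y ⟶ Y) :=
  M.fib.of_isPullback (IsPullback.of_hasBinaryProduct' X Y) hX

lemma trivFib_comp_fst_of_path_object {Y YI : C} (hY : M.Fibrant Y) {j : Y ⟶ YI}
    {π : YI ⟶ Y ⨯ Y} (hj : M.weq j) (hπ : M.fib π) (hfact : j ≫ π = prod.lift (𝟙 Y) (𝟙 Y)) :
    M.trivFib (π ≫ prod.fst) :=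
  ⟨M.fib.comp_mem _ _ hπ (fib_prod_fst Y hY),
    weq_of_comp_eq_id_of_weq_left (by rw [reassoc_of% hfact, prod.lift_fst]) hj⟩

end QuillenModelStructure

open QuillenModelStructure

section MappingPathObject

variable {D : Type*} [Category* D] [HasFiniteLimits D] {X Y Z : D} (p : X ⟶ Y)

lemma isPullback_mappingPathObject_fst {W : D} (π : Z ⟶ Y ⨯ W) :
    IsPullback (pullback.fst (prod.map p (𝟙 W)) π ≫ prod.fst) (pullback.snd _ _) p
      (π ≫ prod.fst) :=
  (IsPullback.of_hasPullback _ _).paste_horiz (IsPullback.of_prod_fst_with_id p W)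

variable {j : Y ⟶ Z} {π : Z ⟶ Y ⨯ Y} (hfact : j ≫ π = prod.lift (𝟙 Y) (𝟙 Y))

noncomputable def mappingPathObjectSection : X ⟶ pullback (prod.map p (𝟙 Y)) π :=
  pullback.lift (prod.lift (𝟙 X) p) (p ≫ j) (by
    rw [Category.assoc, hfact, prod.lift_map, prod.comp_lift, Category.id_comp, Category.comp_id])

lemma mappingPathObjectSection_fst_fst :
    mappingPathObjectSection p hfact ≫ pullback.fst _ _ ≫ prod.fst = 𝟙 X := by
  rw [mappingPathObjectSection, pullback.lift_fst_assoc, prod.lift_fst]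

lemma mappingPathObjectSection_fst_snd :
    mappingPathObjectSection p hfact ≫ pullback.fst _ _ ≫ prod.snd = p := by
  rw [mappingPathObjectSection, pullback.lift_fst_assoc, prod.lift_snd]

end MappingPathObject

/-- If `p : X ⟶ Y` is a weak equivalence of fibrant objects, then the map
`q₃ = proj_Y ∘ q₁ : P ⟶ Y` from the mapping path object is a trivial fibration. -/
theorem mappingPathObject_to_target_trivFib (M : QuillenModelStructure C) {X Y : C}
    (p : X ⟶ Y) (hp : M.weq p) (hX : M.Fibrant X) (hY : M.Fibrant Y)
    (YI : C) (j : Y ⟶ YI) (π : YI ⟶ Y ⨯ Y)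
    (hj : M.weq j) (hπ : M.fib π) (hfact : j ≫ π = prod.lift (𝟙 Y) (𝟙 Y)) :
    M.fib (pullback.fst (prod.map p (𝟙 Y)) π ≫ prod.snd) ∧
      M.weq (pullback.fst (prod.map p (𝟙 Y)) π ≫ prod.snd) := by
  have hfib : M.fib (pullback.fst (prod.map p (𝟙 Y)) π ≫ prod.snd) :=
    M.fib.comp_mem _ _ (M.fib.of_isPullback (IsPullback.of_hasPullback _ _).flip hπ)
      (fib_prod_snd hX Y)
  have htriv : M.trivFib (pullback.fst (prod.map p (𝟙 Y)) π ≫ prod.fst) :=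
    M.trivFib.of_isPullback (isPullback_mappingPathObject_fst p π).flip
      (trivFib_comp_fst_of_path_object hY hj hπ hfact)
  have hs : M.weq (mappingPathObjectSection p hfact) :=
    weq_of_comp_eq_id_of_weq_right (mappingPathObjectSection_fst_fst p hfact) htriv.2
  refine ⟨hfib, M.weq_of_comp_right _ _ hs ?_⟩
  rwa [mappingPathObjectSection_fst_snd]
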